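/- If Γ is a group of order 2n acting as an automorphism group of an HCS(2n+1) sharply transitively on all vertices but one (a 1-rotational action), then Γ contains exactly one element of order 2. -/

import Mathlib

open Pointwise

variable {V : Type*}

/-- The action of a permutation on a simple graph by relabelling vertices. -/
instance permGraphAction : MulAction (Equiv.Perm V) (SimpleGraph V) where
  smul σ H := H.map σ.toEmbedding
  one_smul H := by
    show H.map (1 : Equiv.Perm V).toEmbedding = H
    ext a b
    simp [SimpleGraph.map_adj]
  mul_smul σ τ H := by
    ext a b
    show (H.map (σ * τ).toEmbedding).Adj a b ↔ ((H.map τ.toEmbedding).map σ.toEmbedding).Adj a b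
    simp_rw [SimpleGraph.map_adj]
    simp only [SimpleGraph.map_adj, Equiv.coe_toEmbedding, Equiv.Perm.coe_mul,
      Function.comp_apply]
    constructor
    · rintro ⟨u, v, h, rfl, rfl⟩
      exact ⟨τ u, τ v, ⟨u, v, h, rfl, rfl⟩, rfl, rfl⟩
    · rintro ⟨-, -, ⟨u, v, h, rfl, rfl⟩, rfl, rfl⟩
      exact ⟨u, v, h, rfl, rfl⟩

lemma perm_smul_graph (σ : Equiv.Perm V) (H : SimpleGraph V) :
    σ • H = H.map σ.toEmbedding := rfl

/-- A Hamiltonian cycle of the complete graph on `V`: a connected, 2-regular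
(spanning) subgraph. -/
def IsHamCycle [Fintype V] (H : SimpleGraph V) : Prop :=
  H.Connected ∧ ∀ v : V, (H.neighborSet v).ncard = 2

/-- A Hamiltonian cycle system: a set of Hamiltonian cycles whose edge sets
partition the edge set of the complete graph. -/
def IsHCS [Fintype V] (𝓗 : Set (SimpleGraph V)) : Prop :=
  (∀ H ∈ 𝓗, IsHamCycle H) ∧
    ∀ e ∈ (⊤ : SimpleGraph V).edgeSet, ∃! H, H ∈ 𝓗 ∧ e ∈ H.edgeSet

/-- The full automorphism group of a Hamiltonian cycle system, as the subgroup
of vertex permutations preserving the set of cycles. -/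
def autHCS (𝓗 : Set (SimpleGraph V)) : Subgroup (Equiv.Perm V) :=
  MulAction.stabilizer (Equiv.Perm V) 𝓗

/-- The cycle graph traced by a map from `ZMod m` (consecutive residues are adjacent). -/
def cycleOn {W : Type*} (m : ℕ) (f : ZMod m → W) : SimpleGraph W :=
  SimpleGraph.fromRel (fun a b => ∃ i : ZMod m, f i = a ∧ f (i + 1) = b)

/-
The cycle `H₁` through the edge `{∞, 1}` (with `∞ = none`) has a second edge `{∞, t}` at `∞`.
A right translation `ρ_g = optionMulRight g` stabilises `H₁` exactly when it maps `{∞, 1}` into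
`H₁`, i.e. when `g ∈ {1, t}`; this stabiliser is a subgroup, so `t` is an involution. Every cycle
is a translate of `H₁`, since every cycle passes through `∞`. If `s` is an involution, the cycle
through `{1, s}` is fixed by `ρ_s`; translating it back to `H₁` shows that `s = b t b⁻¹` for some
edge `{b, bt}` of `H₁`. Finally `ρ_t` is an involutive automorphism of the cycle `H₁` fixing `∞`,
and such a reflection flips at most one edge: deleting one flipped edge leaves a tree on which
`ρ_t` acts, and the two ends of a second flipped edge would be equidistant from the fixed vertex
`∞`, which is impossible for adjacent vertices of a tree. Hence all involutions coincide with `t`.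
-/

namespace SimpleGraph

variable {W : Type*} {G : SimpleGraph V}

theorem card_edgeSet_eq_card_of_ncard_neighborSet_eq_two [Finite V]
    (hreg : ∀ v, (G.neighborSet v).ncard = 2) : Nat.card G.edgeSet = Nat.card V := by
  classical
  have := Fintype.ofFinite V
  have hdeg : ∀ v, G.degree v = 2 := fun v => by
    rw [← card_neighborSet_eq_degree, ← Nat.card_eq_fintype_card, Nat.card_coe_set_eq, hreg]
  have hsum := G.sum_degrees_eq_twice_card_edges
  simp only [hdeg, Finset.sum_const, Finset.card_univ, smul_eq_mul] at hsum
  rw [Nat.card_eq_fintype_card, Nat.card_eq_fintype_card, ← edgeFinset_card]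
  omega

theorem isTree_deleteEdges_of_ncard_neighborSet_eq_two [Finite V] (hconn : G.Connected)
    (hreg : ∀ v, (G.neighborSet v).ncard = 2) {x y : V} (hxy : G.Adj x y) :
    (G.deleteEdges {s(x, y)}).IsTree := by
  have hcyc : G.IsCycles := fun v _ => hreg v
  refine isTree_iff_connected_and_card.2 ⟨hconn.connected_delete_edge_of_not_isBridge
    (isBridge_iff.not_left.2 (hcyc.reachable_deleteEdges hxy)), ?_⟩
  rw [edgeSet_deleteEdges, Nat.card_coe_set_eq,
    Set.ncard_sdiff_singleton_add_one (G.mem_edgeSet.2 hxy), ← Nat.card_coe_set_eq,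
    card_edgeSet_eq_card_of_ncard_neighborSet_eq_two hreg]

theorem neighborSet_eq_pair_of_adj {v u : V} (hreg : (G.neighborSet v).ncard = 2)
    (hvu : G.Adj v u) : ∃ w, w ≠ u ∧ G.neighborSet v = {u, w} := by
  obtain ⟨w, hw, hwu⟩ := (G.neighborSet v).exists_ne_of_one_lt_ncard (by omega) u
  refine ⟨w, hwu, (Set.eq_of_subset_of_ncard_le ?_ ?_ (Set.finite_of_ncard_ne_zero ?_)).symm⟩
  · exact Set.insert_subset hvu (Set.singleton_subset_iff.2 hw)
  · rw [hreg, Set.ncard_pair hwu.symm]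
  · omega

theorem Reachable.dist_map_le {G' : SimpleGraph W} (f : G →g G') {u v : V}
    (huv : G.Reachable u v) : G'.dist (f u) (f v) ≤ G.dist u v := by
  obtain ⟨p, hp⟩ := huv.exists_walk_length_eq_dist
  exact hp ▸ p.length_map f ▸ dist_le (p.map f)

theorem Iso.sym2_eq_of_adj_apply [Finite V] (hconn : G.Connected)
    (hreg : ∀ v, (G.neighborSet v).ncard = 2) (φ : G ≃g G) (hφ : Function.Involutive φ)
    {z : V} (hz : φ z = z) {x y : V} (hx : G.Adj x (φ x)) (hy : G.Adj y (φ y)) :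
    s(x, φ x) = s(y, φ y) := by
  by_contra hne
  set T := G.deleteEdges {s(y, φ y)}
  have hT : T.IsTree := isTree_deleteEdges_of_ncard_neighborSet_eq_two hconn hreg hy
  have hφy : Sym2.map φ s(y, φ y) = s(y, φ y) := by
    rw [Sym2.map_mk, hφ y, Sym2.eq_swap]
  let ψ : T →g T := ⟨φ, fun {a b} hab => by
    refine (deleteEdges_adj ..).2 ⟨φ.map_adj_iff.2 ((deleteEdges_adj ..).1 hab).1, ?_⟩
    rw [Set.mem_singleton_iff, ← Sym2.map_mk, ← hφy, (Sym2.map.injective φ.injective).eq_iff]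
    exact ((deleteEdges_adj ..).1 hab).2⟩
  have hxT : T.Adj x (φ x) := (deleteEdges_adj ..).2 ⟨hx, hne⟩
  have hle : T.dist (φ z) (φ x) ≤ T.dist z x := (hT.connected z x).dist_map_le ψ
  have hge : T.dist (φ z) (φ (φ x)) ≤ T.dist z (φ x) := (hT.connected z (φ x)).dist_map_le ψ
  rw [hz] at hle hge
  rw [hφ x] at hge
  exact hT.dist_ne_of_adj z hxT (le_antisymm hge hle)

theorem perm_smul_adj_apply_iff (σ : Equiv.Perm V) (H : SimpleGraph V) {a b : V} :
    (σ • H).Adj (σ a) (σ b) ↔ H.Adj a b :=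
  map_adj_apply

def Iso.ofPermSmulEq {σ : Equiv.Perm V} {H : SimpleGraph V} (hσ : σ • H = H) : H ≃g H where
  toEquiv := σ
  map_rel_iff' {a b} := by
    conv_lhs => rw [← hσ]
    exact perm_smul_adj_apply_iff σ H

end SimpleGraph

open SimpleGraph

section HCS

variable {𝓗 : Set (SimpleGraph V)} {H K : SimpleGraph V} {σ : Equiv.Perm V} {a b : V}

theorem smul_mem_of_mem_autHCS (hσ : σ ∈ autHCS 𝓗) (hH : H ∈ 𝓗) : σ • H ∈ 𝓗 := by
  rw [← MulAction.mem_stabilizer_iff.1 hσ]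
  exact Set.smul_mem_smul_set hH

variable [Fintype V]

theorem IsHCS.exists_mem_adj (h : IsHCS 𝓗) (hab : a ≠ b) : ∃ H ∈ 𝓗, H.Adj a b := by
  obtain ⟨H, ⟨hH, hHab⟩, -⟩ := h.2 s(a, b) (by simpa using hab)
  exact ⟨H, hH, hHab⟩

theorem IsHCS.eq_of_adj (h : IsHCS 𝓗) (hH : H ∈ 𝓗) (hK : K ∈ 𝓗) (hHab : H.Adj a b)
    (hKab : K.Adj a b) : H = K :=
  (h.2 s(a, b) (by simpa using hHab.ne)).unique ⟨hH, hHab⟩ ⟨hK, hKab⟩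

theorem IsHCS.smul_eq_self_of_adj (h : IsHCS 𝓗) (hσ : σ ∈ autHCS 𝓗) (hH : H ∈ 𝓗)
    (hab : H.Adj a b) (hσab : H.Adj (σ a) (σ b)) : σ • H = H :=
  h.eq_of_adj (smul_mem_of_mem_autHCS hσ hH) hH ((perm_smul_adj_apply_iff σ H).2 hab) hσab

end HCS

section OneRotational

variable {Γ : Type*} [Group Γ]

def optionMulRight (g : Γ) : Equiv.Perm (Option Γ) :=
  Equiv.optionCongr (Equiv.mulRight g)

@[simp]
theorem optionMulRight_none (g : Γ) : optionMulRight g none = none := rfl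

@[simp]
theorem optionMulRight_some (g a : Γ) : optionMulRight g (some a) = some (a * g) := rfl

theorem optionMulRight_one : optionMulRight (1 : Γ) = 1 := by
  ext (_ | a) <;> simp

theorem optionMulRight_mul (g k : Γ) :
    optionMulRight (g * k) = optionMulRight k * optionMulRight g := by
  ext (_ | a) <;> simp [mul_assoc]

theorem optionMulRight_involutive {t : Γ} (ht : t * t = 1) :
    Function.Involutive (optionMulRight t) := by
  rintro (_ | a) <;> simp [mul_assoc, ht]

theorem conj_eq_of_sym2_eq {t b c : Γ}
    (h : s(some b, some (b * t)) = s(some c, some (c * t))) : b * t * b⁻¹ = c * t * c⁻¹ := by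
  rcases Sym2.eq_iff.1 h with ⟨hbc, -⟩ | ⟨hbc, -⟩ <;> cases Option.some_injective _ hbc
  · rfl
  · group

variable [Fintype Γ] {𝓗 : Set (SimpleGraph (Option Γ))} {H₁ K : SimpleGraph (Option Γ)} {t : Γ}

theorem IsHCS.exists_optionMulRight_smul_eq (h : IsHCS 𝓗)
    (hrot : ∀ g : Γ, optionMulRight g ∈ autHCS 𝓗) (hH₁ : H₁ ∈ 𝓗) (h1 : H₁.Adj none (some 1))
    (hK : K ∈ 𝓗) : ∃ a : Γ, optionMulRight a • H₁ = K := by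
  obtain ⟨c, hc⟩ : (K.neighborSet none).Nonempty :=
    Set.nonempty_of_ncard_ne_zero (by rw [(h.1 K hK).2 none]; omega)
  obtain ⟨a, rfl⟩ : ∃ a, c = some a := Option.ne_none_iff_exists'.1 (K.ne_of_adj hc).symm
  refine ⟨a, h.eq_of_adj (smul_mem_of_mem_autHCS (hrot a) hH₁) hK ?_ hc⟩
  simpa using (perm_smul_adj_apply_iff (optionMulRight a) H₁).2 h1

theorem IsHCS.optionMulRight_smul_eq_self_iff (h : IsHCS 𝓗)
    (hrot : ∀ g : Γ, optionMulRight g ∈ autHCS 𝓗) (hH₁ : H₁ ∈ 𝓗)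
    (hnbr : H₁.neighborSet none = {some 1, some t}) {g : Γ} :
    optionMulRight g • H₁ = H₁ ↔ g = 1 ∨ g = t := by
  have hadj : ∀ {y}, H₁.Adj none y ↔ y = some 1 ∨ y = some t := fun {y} => by
    rw [← mem_neighborSet, hnbr]
    rfl
  constructor
  · intro hg
    have := (perm_smul_adj_apply_iff (optionMulRight g) H₁).2 (hadj.2 (Or.inl rfl))
    simpa [hg, hadj] using this
  · rintro (rfl | rfl)
    · rw [optionMulRight_one, one_smul]
    · exact h.smul_eq_self_of_adj (hrot _) hH₁ (hadj.2 (Or.inl rfl)) (by simp [hadj])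

theorem IsHCS.mul_self_eq_one_of_neighborSet_eq (h : IsHCS 𝓗)
    (hrot : ∀ g : Γ, optionMulRight g ∈ autHCS 𝓗) (hH₁ : H₁ ∈ 𝓗)
    (hnbr : H₁.neighborSet none = {some 1, some t}) : t * t = 1 := by
  have hstab {g : Γ} := h.optionMulRight_smul_eq_self_iff hrot hH₁ hnbr (g := g)
  have htt : optionMulRight (t * t) • H₁ = H₁ := by
    rw [optionMulRight_mul, mul_smul, hstab.2 (Or.inr rfl), hstab.2 (Or.inr rfl)]
  rcases hstab.1 htt with htt | htt
  · exact htt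
  · rw [mul_eq_right.1 htt, one_mul]

theorem IsHCS.exists_adj_conj_eq (h : IsHCS 𝓗)
    (hrot : ∀ g : Γ, optionMulRight g ∈ autHCS 𝓗) (hH₁ : H₁ ∈ 𝓗)
    (hnbr : H₁.neighborSet none = {some 1, some t}) {s : Γ} (hs : s ≠ 1) (hss : s * s = 1) :
    ∃ b, H₁.Adj (some b) (some (b * t)) ∧ s = b * t * b⁻¹ := by
  have h1 : H₁.Adj none (some 1) := by
    rw [← mem_neighborSet, hnbr]
    exact Set.mem_insert _ _
  obtain ⟨K, hK, hKs⟩ :=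
    h.exists_mem_adj (a := some (1 : Γ)) (b := some s) (by simpa using hs.symm)
  obtain ⟨a, rfl⟩ := h.exists_optionMulRight_smul_eq hrot hH₁ h1 hK
  have hfix : optionMulRight s • optionMulRight a • H₁ = optionMulRight a • H₁ :=
    h.smul_eq_self_of_adj (hrot s) hK hKs (by simpa [hss] using hKs.symm)
  have hconj : a * s * a⁻¹ = t := by
    have : optionMulRight (a * s * a⁻¹) • H₁ = H₁ := by
      rw [optionMulRight_mul, optionMulRight_mul, mul_smul, mul_smul, hfix, ← mul_smul,
        ← optionMulRight_mul, mul_inv_cancel, optionMulRight_one, one_smul]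
    exact ((h.optionMulRight_smul_eq_self_iff hrot hH₁ hnbr).1 this).resolve_left
      (by simpa using hs)
  refine ⟨a⁻¹, ?_, by rw [← hconj]; group⟩
  rw [← perm_smul_adj_apply_iff (optionMulRight a)]
  simpa [← hconj, mul_assoc] using hKs

end OneRotational

theorem one_rotational_group_binary_general {Γ : Type*} [Group Γ] [Fintype Γ]
    (𝓗 : Set (SimpleGraph (Option Γ))) (h : IsHCS 𝓗)
    (hrot : ∀ g : Γ, (Equiv.optionCongr (Equiv.mulRight g)) ∈ autHCS 𝓗) :
    ∃! x : Γ, orderOf x = 2 := by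
  replace hrot : ∀ g : Γ, optionMulRight g ∈ autHCS 𝓗 := hrot
  obtain ⟨H₁, hH₁, h1⟩ := h.exists_mem_adj (a := none) (b := some (1 : Γ)) (by simp)
  obtain ⟨w, hw1, hnbr⟩ := neighborSet_eq_pair_of_adj ((h.1 H₁ hH₁).2 none) h1
  have hw : H₁.Adj none w := by
    rw [← mem_neighborSet, hnbr]
    exact Set.mem_insert_of_mem _ rfl
  obtain ⟨t, rfl⟩ : ∃ t, w = some t := Option.ne_none_iff_exists'.1 (H₁.ne_of_adj hw).symm
  have ht1 : t ≠ 1 := fun ht => hw1 (ht ▸ rfl)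
  have htt := h.mul_self_eq_one_of_neighborSet_eq hrot hH₁ hnbr
  simp only [orderOf_eq_prime_iff, pow_two]
  refine ⟨t, ⟨htt, ht1⟩, fun s ⟨hss, hs⟩ => ?_⟩
  obtain ⟨b, hb, rfl⟩ := h.exists_adj_conj_eq hrot hH₁ hnbr hs hss
  obtain ⟨c, hc, hct⟩ := h.exists_adj_conj_eq hrot hH₁ hnbr ht1 htt
  let φ := Iso.ofPermSmulEq ((h.optionMulRight_smul_eq_self_iff hrot hH₁ hnbr).2 (Or.inr rfl))
  have hflip := φ.sym2_eq_of_adj_apply (h.1 H₁ hH₁).1 (h.1 H₁ hH₁).2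
    (optionMulRight_involutive htt) (z := none) rfl hb hc
  exact (conj_eq_of_sym2_eq (t := t) hflip).trans hct.symm

/-- a group of order `2n` acting 1-rotationally on an HCS of order `2n+1`
(right translations, fixing `∞`, are automorphisms) has exactly one involution. -/
theorem one_rotational_group_binary {Γ : Type*} [Group Γ] [Fintype Γ]
    (n : ℕ) (hcard : Fintype.card Γ = 2 * n)
    (𝓗 : Set (SimpleGraph (Option Γ))) (h : IsHCS 𝓗)
    (hrot : ∀ g : Γ, (Equiv.optionCongr (Equiv.mulRight g)) ∈ autHCS 𝓗) :
    ∃! x : Γ, orderOf x = 2 :=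
  one_rotational_group_binary_general 𝓗 h hrot
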